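/- arXiv:2107.08550 — 2 statements merged into one kernel-verified Lean document; each statement's English description precedes it below -/
import Mathlib

section
/- Theorem 1, part 2 (equation (8)): Let g admit a sum decomposition 𝒢 = {g_1, …, g_m} on a finite ground set Ω partitioned into nonempty pairwise-disjoint blocks U_1, …, U_n, let X^d = {x^d_1, …, x^d_n} be an assignment with x^d_i ∈ U_i, and for each i let N_i ⊆ {1, …, i−1} with N̂_i := {1, …, i−1} \ N_i. Then Σ_{i=1}^{n} γ^dist_i ≤ Σ_{i=1}^{n} Σ_{j ∈ N̂_i} Ŵ(i,j), where γ^dist_i := g(x^d_i | X^d_{N_i}) − g(x^d_i | X^d_{1:i−1}) and Ŵ(i,j) := Σ_{k=1}^{m} min(max_{x ∈ U_i} g_k({x}), max_{x ∈ U_j} g_k({x})). -/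
/-!
By the sum decomposition it suffices to bound the marginal loss for a single normalized, monotone,
submodular `f`. Adding the elements `x_j`, `j ∈ N̂_i`, to the conditioning set one at a time, each
addition of `b` lowers the marginal of `x` by `f(A ∪ x) + f(A ∪ b) − f(A) − f(A ∪ x ∪ b)`. This
second-order difference is symmetric in `x` and `b`, and by submodularity and normalization it is
at most `f {x}` and at most `f {b}`. Marginals are antitone, so conditioning on
`X_{N_i} ∪ X_{N̂_i} ⊇ X_{1:i−1}` instead of `X_{1:i−1}` can only increase the loss.
-/

open Finset

/-- Marginal gain `g(C|A) = g(A ∪ C) − g(A)`. -/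
def marg {Ω : Type*} [DecidableEq Ω] (g : Finset Ω → ℝ) (C A : Finset Ω) : ℝ :=
  g (A ∪ C) - g A

def IsSubmodular {Ω : Type*} [DecidableEq Ω] (f : Finset Ω → ℝ) : Prop :=
  ∀ ⦃A B C : Finset Ω⦄, B ⊆ A → Disjoint A C → f (A ∪ C) - f A ≤ f (B ∪ C) - f B

section Marginal

variable {Ω : Type*} [DecidableEq Ω] {f : Finset Ω → ℝ}

lemma marg_eq_sum {ι : Type*} {gs : ι → Finset Ω → ℝ} (s : Finset ι)
    (hf : ∀ X, f X = ∑ k ∈ s, gs k X) (C A : Finset Ω) :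
    marg f C A = ∑ k ∈ s, marg (gs k) C A := by
  simp only [marg, hf, sum_sub_distrib]

lemma marg_nonneg (hf : Monotone f) (C A : Finset Ω) : 0 ≤ marg f C A :=
  sub_nonneg.2 (hf subset_union_left)

lemma marg_singleton_of_mem {x : Ω} {A : Finset Ω} (hx : x ∈ A) : marg f {x} A = 0 := by
  rw [marg, union_eq_left.2 (singleton_subset_iff.2 hx), sub_self]

lemma marg_singleton_antitone (hf : Monotone f) (hsub : IsSubmodular f) (x : Ω) :
    Antitone (marg f {x}) := by
  intro B A hBA
  by_cases hx : x ∈ A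
  · rw [marg_singleton_of_mem hx]
    exact marg_nonneg hf _ _
  · exact hsub hBA (disjoint_singleton_right.2 hx)

lemma marg_singleton_le (h0 : f ∅ = 0) (hf : Monotone f) (hsub : IsSubmodular f)
    (x : Ω) (A : Finset Ω) : marg f {x} A ≤ f {x} := by
  simpa [marg, h0] using marg_singleton_antitone hf hsub x (empty_subset A)

lemma marg_singleton_sub_marg_union_singleton_le (h0 : f ∅ = 0) (hf : Monotone f)
    (hsub : IsSubmodular f) (x b : Ω) (A : Finset Ω) :
    marg f {x} A - marg f {x} (A ∪ {b}) ≤ min (f {x}) (f {b}) := by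
  have hx := marg_singleton_le h0 hf hsub x A
  have hb := marg_singleton_le h0 hf hsub b A
  have hxb := marg_nonneg hf {x} (A ∪ {b})
  have hbx := marg_nonneg hf {b} (A ∪ {x})
  simp only [marg, union_right_comm A {b} {x}] at *
  exact le_min (by linarith) (by linarith)

lemma marg_singleton_sub_marg_union_le_sum (h0 : f ∅ = 0) (hf : Monotone f)
    (hsub : IsSubmodular f) (x : Ω) (A B : Finset Ω) :
    marg f {x} A - marg f {x} (A ∪ B) ≤ ∑ b ∈ B, min (f {x}) (f {b}) := by
  induction B using Finset.induction_on with
  | empty => simp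
  | insert b B hb ih =>
    have hstep := marg_singleton_sub_marg_union_singleton_le h0 hf hsub x b (A ∪ B)
    rw [sum_insert hb, union_insert, insert_eq, union_comm {b}]
    linarith

lemma marg_image_sub_marg_image_le_sum {ι : Type*} [DecidableEq ι] (h0 : f ∅ = 0)
    (hf : Monotone f) (hsub : IsSubmodular f) (y : ι → Ω) (x : Ω) (N S : Finset ι) :
    marg f {x} (N.image y) - marg f {x} (S.image y) ≤ ∑ j ∈ S \ N, min (f {x}) (f {y j}) := by
  have hS : S.image y ⊆ N.image y ∪ (S \ N).image y := by
    rw [← image_union, union_sdiff_self_eq_union]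
    exact image_subset_image subset_union_right
  have hnonneg (s : Finset Ω) : 0 ≤ f s := h0 ▸ hf (empty_subset s)
  calc marg f {x} (N.image y) - marg f {x} (S.image y)
      ≤ marg f {x} (N.image y) - marg f {x} (N.image y ∪ (S \ N).image y) :=
        sub_le_sub_left (marg_singleton_antitone hf hsub x hS) _
    _ ≤ ∑ b ∈ (S \ N).image y, min (f {x}) (f {b}) :=
        marg_singleton_sub_marg_union_le_sum h0 hf hsub x _ _
    _ ≤ ∑ j ∈ S \ N, min (f {x}) (f {y j}) :=
        sum_image_le_of_nonneg fun _ _ => le_min (hnonneg _) (hnonneg _)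

end Marginal

theorem total_distributed_cost_bound_general
    {Ω : Type*} [DecidableEq Ω]
    (g : Finset Ω → ℝ)
    (m : ℕ) (gs : Fin m → Finset Ω → ℝ)
    (hnorm : ∀ k, gs k ∅ = 0)
    (hmono : ∀ k, ∀ ⦃A B : Finset Ω⦄, B ⊆ A → gs k B ≤ gs k A)
    (hsub : ∀ k, ∀ ⦃A B C : Finset Ω⦄, B ⊆ A → Disjoint A C →
      gs k (A ∪ C) - gs k A ≤ gs k (B ∪ C) - gs k B)
    (hdecomp : ∀ X : Finset Ω, g X = ∑ k : Fin m, gs k X)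
    (n : ℕ) (U : Fin n → Finset Ω)
    (hUne : ∀ i, (U i).Nonempty)
    (xd : Fin n → Ω) (hxd : ∀ i, xd i ∈ U i)
    (Ni : Fin n → Finset (Fin n)) :
    ∑ i : Fin n,
        (marg g {xd i} (Finset.image xd (Ni i))
          - marg g {xd i} (Finset.image xd (Finset.univ.filter (· < i))))
      ≤ ∑ i : Fin n, ∑ j ∈ (Finset.univ.filter (· < i)) \ Ni i,
          ∑ k : Fin m,
            min ((U i).sup' (hUne i) (fun x => gs k {x}))
                ((U j).sup' (hUne j) (fun x => gs k {x})) := by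
  refine sum_le_sum fun i _ => ?_
  rw [sum_comm, marg_eq_sum _ hdecomp, marg_eq_sum _ hdecomp, ← sum_sub_distrib]
  refine sum_le_sum fun k _ => ?_
  refine (marg_image_sub_marg_image_le_sum (hnorm k) (fun _ _ h => hmono k h) (hsub k)
    xd (xd i) _ _).trans (sum_le_sum fun j _ => ?_)
  exact min_le_min (le_sup' (fun x => gs k {x}) (hxd i)) (le_sup' (fun x => gs k {x}) (hxd j))

/-- Theorem 1, part 2 (equation (8)). -/
theorem total_distributed_cost_bound
    {Ω : Type*} [Fintype Ω] [DecidableEq Ω]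
    (g : Finset Ω → ℝ)
    (m : ℕ) (gs : Fin m → Finset Ω → ℝ)
    (hnorm : ∀ k, gs k ∅ = 0)
    (hmono : ∀ k, ∀ ⦃A B : Finset Ω⦄, B ⊆ A → gs k B ≤ gs k A)
    (hsub : ∀ k, ∀ ⦃A B C : Finset Ω⦄, B ⊆ A → Disjoint A C →
      gs k (A ∪ C) - gs k A ≤ gs k (B ∪ C) - gs k B)
    (hdecomp : ∀ X : Finset Ω, g X = ∑ k : Fin m, gs k X)
    (n : ℕ) (U : Fin n → Finset Ω)
    (hUne : ∀ i, (U i).Nonempty)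
    (hUdisj : ∀ i j, i ≠ j → Disjoint (U i) (U j))
    (hUcover : ∀ x : Ω, ∃ i, x ∈ U i)
    (xd : Fin n → Ω) (hxd : ∀ i, xd i ∈ U i)
    (Ni : Fin n → Finset (Fin n)) (hNi : ∀ i, ∀ j ∈ Ni i, j < i) :
    ∑ i : Fin n,
        (marg g {xd i} (Finset.image xd (Ni i))
          - marg g {xd i} (Finset.image xd (Finset.univ.filter (· < i))))
      ≤ ∑ i : Fin n, ∑ j ∈ (Finset.univ.filter (· < i)) \ Ni i,
          ∑ k : Fin m,
            min ((U i).sup' (hUne i) (fun x => gs k {x}))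
                ((U j).sup' (hUne j) (fun x => gs k {x})) :=
  total_distributed_cost_bound_general g m gs hnorm hmono hsub hdecomp n U hUne xd hxd Ni
end

section
/- Theorem 1, part 1 (equation (7)): Let g be a normalized, monotone, submodular set function on a finite ground set Ω partitioned into nonempty pairwise-disjoint blocks U_1, …, U_n. Let X^d = {x^d_1, …, x^d_n} be an assignment with x^d_i ∈ U_i; for each i fix N_i ⊆ {1, …, i−1} and an approximation g̃_i : U_i → ℝ of the marginal gains x ↦ g(x | X^d_{N_i}). Then for any set X* containing at most one element of each block, g(X*) ≤ 2·g(X^d) + Σ_{i=1}^{n} ( γ^dist_i + γ^obj_i + γ^plan_i ), where γ^dist_i := g(x^d_i | X^d_{N_i}) − g(x^d_i | X^d_{1:i−1}); γ^obj_i := max_{x_1,x_2 ∈ U_i} [ (g̃_i(x_1) − g(x_1|X^d_{N_i})) + (g(x_2|X^d_{N_i}) − g̃_i(x_2)) ]; and γ^plan_i := max_{x'∈U_i} g̃_i(x') − g̃_i(x^d_i). -/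
open Finset

section aux
variable {Ω : Type*} [DecidableEq Ω] {g : Finset Ω → ℝ}

lemma marg_nonneg_s14 (hmono : ∀ ⦃A B : Finset Ω⦄, B ⊆ A → g B ≤ g A)
    (x : Ω) (A : Finset Ω) : 0 ≤ marg g {x} A :=
  sub_nonneg.mpr (hmono subset_union_left)

lemma marg_anti (hmono : ∀ ⦃A B : Finset Ω⦄, B ⊆ A → g B ≤ g A)
    (hsub : ∀ ⦃A B C : Finset Ω⦄, B ⊆ A → Disjoint A C →
      g (A ∪ C) - g A ≤ g (B ∪ C) - g B)
    {A B : Finset Ω} (hAB : A ⊆ B) (x : Ω) :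
    marg g {x} B ≤ marg g {x} A := by
  by_cases hx : x ∈ B
  · have h1 : B ∪ {x} = B := by rw [Finset.union_comm, ← Finset.insert_eq, Finset.insert_eq_self.2 hx]
    rw [marg, h1, sub_self]
    exact marg_nonneg_s14 hmono x A
  · exact hsub hAB (by simp [hx])

lemma marg_union_le (hmono : ∀ ⦃A B : Finset Ω⦄, B ⊆ A → g B ≤ g A)
    (hsub : ∀ ⦃A B C : Finset Ω⦄, B ⊆ A → Disjoint A C →
      g (A ∪ C) - g A ≤ g (B ∪ C) - g B)
    (A S : Finset Ω) :
    g (A ∪ S) - g A ≤ ∑ x ∈ S, marg g {x} A := by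
  induction S using Finset.induction with
  | empty => simp
  | @insert a S ha ih =>
    rw [Finset.sum_insert ha]
    by_cases haA : a ∈ A ∪ S
    · have h1 : A ∪ insert a S = A ∪ S := by
        rw [Finset.union_insert, Finset.insert_eq_self.2 haA]
      rw [h1]
      have := marg_nonneg_s14 hmono a A
      linarith
    · have h1 : g ((A ∪ S) ∪ {a}) - g (A ∪ S) ≤ marg g {a} A :=
        hsub subset_union_left (by simp [Finset.disjoint_singleton_right, haA])
      have h2 : A ∪ insert a S = (A ∪ S) ∪ {a} := by
        rw [Finset.union_comm (A ∪ S) {a}, ← Finset.insert_eq, Finset.union_insert]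
      rw [h2]
      linarith
end aux

lemma telescope {Ω : Type*} [DecidableEq Ω] {g : Finset Ω → ℝ} (hnorm : g ∅ = 0)
    {n : ℕ} (xd : Fin n → Ω) :
    ∑ i : Fin n, marg g {xd i} (Finset.image xd (Finset.univ.filter (· < i)))
      = g (Finset.image xd Finset.univ) := by
  set F : ℕ → ℝ := fun k => g ((Finset.univ.filter (fun j : Fin n => (j : ℕ) < k)).image xd)
    with hF
  have key : ∀ i : Fin n, marg g {xd i} (Finset.image xd (Finset.univ.filter (· < i)))
      = F ((i : ℕ) + 1) - F (i : ℕ) := by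
    intro i
    have hfilt : Finset.univ.filter (· < i)
        = Finset.univ.filter (fun j : Fin n => (j : ℕ) < (i : ℕ)) := by
      rfl
    have hins : (Finset.univ.filter (fun j : Fin n => (j : ℕ) < (i : ℕ) + 1))
        = insert i (Finset.univ.filter (fun j : Fin n => (j : ℕ) < (i : ℕ))) := by
      ext j
      simp only [Finset.mem_insert, Finset.mem_filter, Finset.mem_univ, true_and,
        Nat.lt_succ_iff_lt_or_eq, Fin.ext_iff]
      tauto
    have himg : (Finset.univ.filter (fun j : Fin n => (j : ℕ) < (i : ℕ))).image xd ∪ {xd i}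
        = (Finset.univ.filter (fun j : Fin n => (j : ℕ) < (i : ℕ) + 1)).image xd := by
      rw [hins, Finset.image_insert, Finset.union_comm, ← Finset.insert_eq]
    rw [marg, hfilt, himg]
  rw [Finset.sum_congr rfl (fun i _ => key i),
    Fin.sum_univ_eq_sum_range (fun k => F (k + 1) - F k) n,
    Finset.sum_range_sub]
  have h0 : F 0 = 0 := by simp [hF, hnorm]
  have hn : F n = g (Finset.image xd Finset.univ) := by
    have huniv : Finset.univ.filter (fun j : Fin n => (j : ℕ) < n) = Finset.univ :=
      Finset.filter_true_of_mem (fun j _ => j.isLt)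
    simp [hF, huniv]
  rw [h0, hn, sub_zero]

/-- Theorem 1, part 1 (equation (7)). -/
theorem distributed_planning_suboptimality
    {Ω : Type*} [Fintype Ω] [DecidableEq Ω]
    (g : Finset Ω → ℝ)
    (hnorm : g ∅ = 0)
    (hmono : ∀ ⦃A B : Finset Ω⦄, B ⊆ A → g B ≤ g A)
    (hsub : ∀ ⦃A B C : Finset Ω⦄, B ⊆ A → Disjoint A C →
      g (A ∪ C) - g A ≤ g (B ∪ C) - g B)
    (n : ℕ) (U : Fin n → Finset Ω)
    (hUne : ∀ i, (U i).Nonempty)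
    (hUdisj : ∀ i j, i ≠ j → Disjoint (U i) (U j))
    (hUcover : ∀ x : Ω, ∃ i, x ∈ U i)
    (xd : Fin n → Ω) (hxd : ∀ i, xd i ∈ U i)
    (Ni : Fin n → Finset (Fin n)) (hNi : ∀ i, ∀ j ∈ Ni i, j < i)
    (gt : Fin n → Ω → ℝ)
    (Xstar : Finset Ω) (hXstar : ∀ i, (Xstar ∩ U i).card ≤ 1) :
    g Xstar ≤ 2 * g (Finset.image xd Finset.univ)
      + ∑ i : Fin n,
          ((marg g {xd i} (Finset.image xd (Ni i))
              - marg g {xd i} (Finset.image xd (Finset.univ.filter (· < i))))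
            + ((U i ×ˢ U i).sup' ((hUne i).product (hUne i))
                (fun p => (gt i p.1 - marg g {p.1} (Finset.image xd (Ni i)))
                  + (marg g {p.2} (Finset.image xd (Ni i)) - gt i p.2)))
            + ((U i).sup' (hUne i) (gt i) - gt i (xd i))) := by
  classical
  set Xd := Finset.image xd Finset.univ with hXd
  set P : Fin n → Finset Ω := fun i => Finset.image xd (Finset.univ.filter (· < i)) with hP
  set Nimg : Fin n → Finset Ω := fun i => Finset.image xd (Ni i) with hNdef
  set γ : Fin n → ℝ := fun i =>
    (marg g {xd i} (Nimg i) - marg g {xd i} (P i))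
      + ((U i ×ˢ U i).sup' ((hUne i).product (hUne i))
          (fun p => (gt i p.1 - marg g {p.1} (Nimg i))
            + (marg g {p.2} (Nimg i) - gt i p.2)))
      + ((U i).sup' (hUne i) (gt i) - gt i (xd i)) with hγ
  -- key per-element bound
  have key : ∀ i : Fin n, ∀ x ∈ U i, marg g {x} Xd ≤ γ i + marg g {xd i} (P i) := by
    intro i x hx
    have hPXd : P i ⊆ Xd := Finset.image_subset_image (Finset.subset_univ _)
    have hNP : Nimg i ⊆ P i := by
      apply Finset.image_subset_image
      intro j hj
      exact Finset.mem_filter.2 ⟨Finset.mem_univ j, hNi i j hj⟩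
    have h1 : marg g {x} Xd ≤ marg g {x} (P i) := marg_anti hmono hsub hPXd x
    have h2 : marg g {x} (P i) ≤ marg g {x} (Nimg i) := marg_anti hmono hsub hNP x
    have hmem : (xd i, x) ∈ U i ×ˢ U i := Finset.mem_product.2 ⟨hxd i, hx⟩
    have h3 := Finset.le_sup' (s := U i ×ˢ U i)
      (fun p : Ω × Ω => (gt i p.1 - marg g {p.1} (Nimg i))
        + (marg g {p.2} (Nimg i) - gt i p.2)) hmem
    have h4 : gt i x ≤ (U i).sup' (hUne i) (gt i) := Finset.le_sup' _ hx
    rw [hγ]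
    dsimp only
    linarith
  have keynn : ∀ i : Fin n, 0 ≤ γ i + marg g {xd i} (P i) :=
    fun i => le_trans (marg_nonneg_s14 hmono (xd i) Xd) (key i (xd i) (hxd i))
  -- partition Xstar into blocks
  have hpart : Xstar = Finset.univ.biUnion (fun i => Xstar ∩ U i) := by
    ext x
    simp only [Finset.mem_biUnion, Finset.mem_univ, true_and, Finset.mem_inter]
    constructor
    · intro hx; obtain ⟨i, hi⟩ := hUcover x; exact ⟨i, hx, hi⟩
    · rintro ⟨i, hx, -⟩; exact hx
  have hdisj : (↑(Finset.univ : Finset (Fin n)) : Set (Fin n)).PairwiseDisjoint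
      (fun i => Xstar ∩ U i) := by
    intro i _ j _ hij
    exact (hUdisj i j hij).mono Finset.inter_subset_right Finset.inter_subset_right
  have hsum : ∑ x ∈ Xstar, marg g {x} Xd
      = ∑ i : Fin n, ∑ x ∈ Xstar ∩ U i, marg g {x} Xd := by
    conv_lhs => rw [hpart]
    exact Finset.sum_biUnion hdisj
  -- per-block bound
  have hblock : ∀ i : Fin n, ∑ x ∈ Xstar ∩ U i, marg g {x} Xd
      ≤ γ i + marg g {xd i} (P i) := by
    intro i
    rcases (Xstar ∩ U i).eq_empty_or_nonempty with h | ⟨x, hx⟩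
    · rw [h, Finset.sum_empty]; exact keynn i
    · have hsingle : Xstar ∩ U i = {x} :=
        Finset.eq_singleton_iff_unique_mem.2
          ⟨hx, fun y hy => Finset.card_le_one.1 (hXstar i) y hy x hx⟩
      rw [hsingle, Finset.sum_singleton]
      exact key i x ((Finset.mem_inter.1 hx).2)
  have hchain1 : g Xstar ≤ g (Xd ∪ Xstar) := hmono Finset.subset_union_right
  have hchain2 : g (Xd ∪ Xstar) - g Xd ≤ ∑ x ∈ Xstar, marg g {x} Xd :=
    marg_union_le hmono hsub Xd Xstar
  have hchain3 : ∑ i : Fin n, ∑ x ∈ Xstar ∩ U i, marg g {x} Xd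
      ≤ ∑ i : Fin n, (γ i + marg g {xd i} (P i)) :=
    Finset.sum_le_sum (fun i _ => hblock i)
  have htel : ∑ i : Fin n, marg g {xd i} (P i) = g Xd := telescope hnorm xd
  have hsplit : ∑ i : Fin n, (γ i + marg g {xd i} (P i))
      = (∑ i : Fin n, γ i) + ∑ i : Fin n, marg g {xd i} (P i) := Finset.sum_add_distrib
  linarith [hchain1, hchain2, hsum ▸ hchain2, hchain3]
end
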